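/- Let λ₁ ≥ λ₂ ≥ λ₃ ≥ λ₄ ≥ 0, Σλᵢ = 1, λ₁ = λ₃ + 2√(λ₂λ₄), and suppose λ₁ > λ₂ > λ₃ > λ₄. Then there exists x with 0 < x < min{λ₁−λ₂, λ₂−λ₃, λ₃−λ₄} such that both vectors μ = (λ₁+x, λ₂, λ₃+x, λ₄)/(1+2x) and ν = (λ₁−x, λ₂, λ₃−x, λ₄)/(1−2x) are sorted non-increasingly and satisfy the condition μ₁ ≤ μ₃ + 2√(μ₂μ₄) (resp. for ν), and λ = ((1+2x)/2)μ + ((1−2x)/2)ν with μ ≠ ν. -/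
import Mathlib

lemma sqrt_inv_mul_aux (c a b : ℝ) (hc : 0 ≤ c) :
    Real.sqrt (c⁻¹ * a * (c⁻¹ * b)) = c⁻¹ * Real.sqrt (a * b) := by
  have : c⁻¹ * a * (c⁻¹ * b) = c⁻¹ ^ 2 * (a * b) := by ring
  rw [this, Real.sqrt_mul (sq_nonneg _), Real.sqrt_sq (inv_nonneg.2 hc)]

/-- A boundary spectrum of the two-qubit absolutely separable set with four distinct
eigenvalues is a nontrivial convex combination of two spectra in the set: there is
`0 < x < min{λ₁−λ₂, λ₂−λ₃, λ₃−λ₄}` such that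
`μ = (λ₁+x, λ₂, λ₃+x, λ₄)/(1+2x)` and `ν = (λ₁−x, λ₂, λ₃−x, λ₄)/(1−2x)` are sorted
non-increasingly, both satisfy `·₁ ≤ ·₃ + 2√(·₂·₄)`, and
`λ = ((1+2x)/2)μ + ((1−2x)/2)ν` with `μ ≠ ν`. -/
theorem boundary_four_distinct_eigenvalues_not_extreme (l : Fin 4 → ℝ)
    (hsort : l 0 > l 1 ∧ l 1 > l 2 ∧ l 2 > l 3 ∧ l 3 ≥ 0)
    (hsum : ∑ i, l i = 1)
    (hbound : l 0 = l 2 + 2 * Real.sqrt (l 1 * l 3)) :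
    ∃ (x : ℝ) (μ ν : Fin 4 → ℝ),
      0 < x ∧ x < l 0 - l 1 ∧ x < l 1 - l 2 ∧ x < l 2 - l 3 ∧
      μ = (1 + 2 * x)⁻¹ • ![l 0 + x, l 1, l 2 + x, l 3] ∧
      ν = (1 - 2 * x)⁻¹ • ![l 0 - x, l 1, l 2 - x, l 3] ∧
      (μ 0 ≥ μ 1 ∧ μ 1 ≥ μ 2 ∧ μ 2 ≥ μ 3) ∧
      μ 0 ≤ μ 2 + 2 * Real.sqrt (μ 1 * μ 3) ∧
      (ν 0 ≥ ν 1 ∧ ν 1 ≥ ν 2 ∧ ν 2 ≥ ν 3) ∧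
      ν 0 ≤ ν 2 + 2 * Real.sqrt (ν 1 * ν 3) ∧
      l = ((1 + 2 * x) / 2) • μ + ((1 - 2 * x) / 2) • ν ∧
      μ ≠ ν := by
  obtain ⟨h01, h12, h23, h3⟩ := hsort
  have hsum4 : l 0 + l 1 + l 2 + l 3 = 1 := by
    have := hsum
    simp [Fin.sum_univ_four] at this
    linarith
  set g : ℝ := min (l 0 - l 1) (min (l 1 - l 2) (l 2 - l 3)) with hg
  have hg0 : 0 < g := by
    simp only [hg, lt_min_iff]
    refine ⟨by linarith, by linarith, by linarith⟩
  have hg1 : g ≤ l 0 - l 1 := min_le_left _ _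
  have hg2 : g ≤ l 1 - l 2 := le_trans (min_le_right _ _) (min_le_left _ _)
  have hg3 : g ≤ l 2 - l 3 := le_trans (min_le_right _ _) (min_le_right _ _)
  have hgsmall : g ≤ 1 / 3 := by linarith
  set x : ℝ := g / 2 with hx
  have hx0 : 0 < x := by positivity
  have hxhalf : x < 1 / 2 := by simp only [hx]; linarith
  have hp : (0:ℝ) < 1 + 2 * x := by linarith
  have hm : (0:ℝ) < 1 - 2 * x := by linarith
  refine ⟨x, _, _, hx0, by simp only [hx]; linarith, by simp only [hx]; linarith,
    by simp only [hx]; linarith, rfl, rfl, ?_, ?_, ?_, ?_, ?_, ?_⟩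
  · simp only [Pi.smul_apply, smul_eq_mul, Matrix.cons_val_zero, Matrix.cons_val_one,
      Matrix.head_cons, Matrix.cons_val_two, Matrix.tail_cons, Matrix.cons_val_three]
    refine ⟨?_, ?_, ?_⟩ <;> apply mul_le_mul_of_nonneg_left _ (le_of_lt (inv_pos.2 hp)) <;>
      simp only [hx] <;> linarith
  · simp only [Pi.smul_apply, smul_eq_mul, Matrix.cons_val_zero, Matrix.cons_val_one,
      Matrix.head_cons, Matrix.cons_val_two, Matrix.tail_cons, Matrix.cons_val_three]
    rw [sqrt_inv_mul_aux _ _ _ hp.le]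
    have : (1 + 2 * x)⁻¹ * (l 0 + x) = (1 + 2 * x)⁻¹ * (l 2 + x) +
        2 * ((1 + 2 * x)⁻¹ * Real.sqrt (l 1 * l 3)) := by
      rw [hbound]; ring
    linarith
  · simp only [Pi.smul_apply, smul_eq_mul, Matrix.cons_val_zero, Matrix.cons_val_one,
      Matrix.head_cons, Matrix.cons_val_two, Matrix.tail_cons, Matrix.cons_val_three]
    refine ⟨?_, ?_, ?_⟩ <;> apply mul_le_mul_of_nonneg_left _ (le_of_lt (inv_pos.2 hm)) <;>
      simp only [hx] <;> linarith
  · simp only [Pi.smul_apply, smul_eq_mul, Matrix.cons_val_zero, Matrix.cons_val_one,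
      Matrix.head_cons, Matrix.cons_val_two, Matrix.tail_cons, Matrix.cons_val_three]
    rw [sqrt_inv_mul_aux _ _ _ hm.le]
    have : (1 - 2 * x)⁻¹ * (l 0 - x) = (1 - 2 * x)⁻¹ * (l 2 - x) +
        2 * ((1 - 2 * x)⁻¹ * Real.sqrt (l 1 * l 3)) := by
      rw [hbound]; ring
    linarith
  · funext i
    fin_cases i <;>
      simp only [Fin.zero_eta, Fin.mk_one, show (⟨2, by norm_num⟩ : Fin 4) = 2 from rfl,
        show (⟨3, by norm_num⟩ : Fin 4) = 3 from rfl, Pi.add_apply, Pi.smul_apply, smul_eq_mul,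
        Matrix.cons_val_zero, Matrix.cons_val_one, Matrix.head_cons, Matrix.cons_val_two,
        Matrix.tail_cons, Matrix.cons_val_three, Fin.isValue] <;>
      field_simp <;> ring
  · intro h
    have h1 := congrFun h 1
    simp only [Pi.smul_apply, smul_eq_mul, Matrix.cons_val_one, Matrix.head_cons] at h1
    have hl1 : l 1 ≠ 0 := by linarith
    have : (1 + 2 * x)⁻¹ = (1 - 2 * x)⁻¹ := mul_right_cancel₀ hl1 h1
    have : (1 + 2 * x) = (1 - 2 * x) := by
      have := congrArg (·⁻¹) this
      simpa [inv_inv] using this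
    linarith
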